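/- arXiv:2105.03955 — 6 statements merged into one kernel-verified Lean document; each statement's English description precedes it below -/
import Mathlib

section
/- Let α be a derivation of a finite-dimensional real nilpotent Lie algebra 𝔫 such that every eigenvalue of α (over ℂ) has real part equal to a fixed σ > 0. Then 𝔫 is abelian. -/
open TensorProduct

/-!
A derivation maps `[𝔫^λ, 𝔫^μ]` into `𝔫^{λ+μ}` (generalized eigenspaces). When all eigenvalues
have real part `σ ≠ 0`, the sum `λ + μ` of two eigenvalues has real part `2σ` and is never an
eigenvalue, so generalized eigenspaces of the complexified derivation commute with each other.
They span `ℂ ⊗ 𝔫`, which is therefore abelian, and `𝔫` embeds into it.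
-/

namespace LieDerivation

variable {R L : Type*} [CommRing R] [LieRing L] [LieAlgebra R L] (D : LieDerivation R L L)

lemma sub_smul_one_apply_lie (a b : R) (x y : L) :
    ((D : Module.End R L) - (a + b) • 1) ⁅x, y⁆ =
      ⁅((D : Module.End R L) - a • 1) x, y⁆ + ⁅x, ((D : Module.End R L) - b • 1) y⁆ := by
  simp only [LinearMap.sub_apply, LinearMap.smul_apply, Module.End.one_apply, coeFn_coe,
    apply_lie_eq_add, sub_lie, lie_sub, smul_lie, lie_smul, add_smul, LinearMap.add_apply]
  abel

lemma pow_sub_smul_one_apply_lie_eq_zero {a b : R} {x y : L} {p q : ℕ}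
    (hx : (((D : Module.End R L) - a • 1) ^ p) x = 0)
    (hy : (((D : Module.End R L) - b • 1) ^ q) y = 0) :
    (((D : Module.End R L) - (a + b) • 1) ^ (p + q)) ⁅x, y⁆ = 0 := by
  induction p generalizing q x y with
  | zero => simp_all
  | succ p ihp =>
    induction q generalizing x y with
    | zero => simp_all
    | succ q ihq =>
      rw [pow_succ, Module.End.mul_apply] at hx hy
      have h₁ := ihp hx (q := q + 1) (by rwa [pow_succ, Module.End.mul_apply])
      have h₂ := ihq (by rwa [pow_succ, Module.End.mul_apply]) hy
      rw [show p + 1 + q = p + (q + 1) by omega] at h₂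
      rw [show p + 1 + (q + 1) = p + (q + 1) + 1 by omega, pow_succ, Module.End.mul_apply,
        sub_smul_one_apply_lie, map_add, h₁, h₂, add_zero]

lemma lie_mem_maxGenEigenspace {a b : R} {x y : L}
    (hx : x ∈ Module.End.maxGenEigenspace (D : Module.End R L) a)
    (hy : y ∈ Module.End.maxGenEigenspace (D : Module.End R L) b) :
    ⁅x, y⁆ ∈ Module.End.maxGenEigenspace (D : Module.End R L) (a + b) := by
  rw [Module.End.mem_maxGenEigenspace] at hx hy ⊢
  obtain ⟨p, hp⟩ := hx
  obtain ⟨q, hq⟩ := hy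
  exact ⟨p + q, D.pow_sub_smul_one_apply_lie_eq_zero hp hq⟩

variable (A : Type*) [CommRing A] [Algebra R A]

def baseChange : LieDerivation A (A ⊗[R] L) (A ⊗[R] L) where
  toLinearMap := (D : L →ₗ[R] L).baseChange A
  leibniz' x y := by
    induction x using TensorProduct.induction_on with
    | zero => simp
    | add x₁ x₂ h₁ h₂ => simp only [add_lie, map_add, h₁, h₂, lie_add]; abel
    | tmul s l =>
      induction y using TensorProduct.induction_on with
      | zero => simp
      | add y₁ y₂ h₁ h₂ => simp only [lie_add, map_add, h₁, h₂, add_lie]; abel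
      | tmul t m =>
        simp only [LieAlgebra.ExtendScalars.bracket_tmul, LinearMap.baseChange_tmul, coeFn_coe,
          apply_lie_eq_sub, tmul_sub, mul_comm t s]

end LieDerivation

lemma Module.End.hasEigenvalue_of_mem_maxGenEigenspace {R M : Type*} [CommRing R] [AddCommGroup M]
    [Module R M] {f : Module.End R M} {μ : R} {x : M} (hx : x ∈ f.maxGenEigenspace μ)
    (hx₀ : x ≠ 0) : f.HasEigenvalue μ :=
  (hasUnifEigenvalue_iff_hasUnifEigenvalue_one (k := ⊤) WithTop.top_pos).mp
    ((Submodule.ne_bot_iff _).mpr ⟨x, hx, hx₀⟩)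

open Module.End in
theorem LieDerivation.isLieAbelian_of_not_hasEigenvalue_add {K L : Type*} [Field K] [IsAlgClosed K]
    [LieRing L] [LieAlgebra K L] [FiniteDimensional K L] (D : LieDerivation K L L)
    (h : ∀ a b, HasEigenvalue (D : Module.End K L) a → HasEigenvalue (D : Module.End K L) b →
      ¬ HasEigenvalue (D : Module.End K L) (a + b)) :
    IsLieAbelian L := by
  have lie_eq_zero {a b : K} {x y : L} (hx : x ∈ maxGenEigenspace (D : Module.End K L) a)
      (hy : y ∈ maxGenEigenspace (D : Module.End K L) b) : ⁅x, y⁆ = 0 := by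
    by_contra hxy
    have hx₀ : x ≠ 0 := by rintro rfl; exact hxy (zero_lie y)
    have hy₀ : y ≠ 0 := by rintro rfl; exact hxy (lie_zero x)
    exact h a b (hasEigenvalue_of_mem_maxGenEigenspace hx hx₀)
      (hasEigenvalue_of_mem_maxGenEigenspace hy hy₀)
      (hasEigenvalue_of_mem_maxGenEigenspace (D.lie_mem_maxGenEigenspace hx hy) hxy)
  have mem_iSup (z : L) : z ∈ ⨆ μ, maxGenEigenspace (D : Module.End K L) μ := by
    rw [iSup_maxGenEigenspace_eq_top]; exact Submodule.mem_top
  refine ⟨fun x y => ?_⟩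
  refine Submodule.iSup_induction _ (motive := fun x => ⁅x, y⁆ = 0) (mem_iSup x) (fun a x hx => ?_)
    (zero_lie y) (fun x₁ x₂ h₁ h₂ => by rw [add_lie, h₁, h₂, add_zero])
  exact Submodule.iSup_induction _ (motive := fun y => ⁅x, y⁆ = 0) (mem_iSup y)
    (fun b y hy => lie_eq_zero hx hy) (lie_zero x)
    (fun y₁ y₂ h₁ h₂ => by rw [lie_add, h₁, h₂, add_zero])

lemma LieAlgebra.isLieAbelian_of_isLieAbelian_tensorProduct (R A : Type*) {L : Type*} [CommRing R]
    [CommRing A] [Algebra R A] [Module.FaithfullyFlat R A] [LieRing L] [LieAlgebra R L]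
    [IsLieAbelian (A ⊗[R] L)] : IsLieAbelian L := by
  refine ⟨fun x y => ?_⟩
  rw [← Module.FaithfullyFlat.one_tmul_eq_zero_iff (R := R) (A := A) (M := L), ← one_mul (1 : A),
    ← LieAlgebra.ExtendScalars.bracket_tmul]
  exact trivial_lie_zero _ _ _ _

theorem stmt_8_general (L : Type) [LieRing L] [LieAlgebra ℝ L] [FiniteDimensional ℝ L]
    (α : LieDerivation ℝ L L) (σ : ℝ) (hσ : 0 < σ)
    (heig : ∀ μ : ℂ,
      Module.End.HasEigenvalue (LinearMap.baseChange ℂ α.toLinearMap) μ → μ.re = σ) :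
    IsLieAbelian L := by
  have : IsLieAbelian (ℂ ⊗[ℝ] L) := (α.baseChange ℂ).isLieAbelian_of_not_hasEigenvalue_add
    fun a b ha hb hab => by
      have hre := heig _ hab
      rw [Complex.add_re, heig a ha, heig b hb] at hre
      linarith
  exact LieAlgebra.isLieAbelian_of_isLieAbelian_tensorProduct ℝ ℂ

/-- If all eigenvalues (over `ℂ`) of a derivation of a finite-dimensional real nilpotent
Lie algebra have real part equal to a fixed `σ > 0`, then the Lie algebra is abelian. -/
theorem stmt_8 (L : Type) [LieRing L] [LieAlgebra ℝ L] [FiniteDimensional ℝ L]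
    [LieRing.IsNilpotent L]
    (α : LieDerivation ℝ L L) (σ : ℝ) (hσ : 0 < σ)
    (heig : ∀ μ : ℂ,
      Module.End.HasEigenvalue (LinearMap.baseChange ℂ α.toLinearMap) μ → μ.re = σ) :
    IsLieAbelian L :=
  stmt_8_general L α σ hσ heig
end

section
/- Let 𝔤 be a finite-dimensional real completely solvable Lie algebra such that 𝔤 = [𝔤,𝔤] ⊕ ℝA with [𝔤,𝔤] abelian of dimension n−1 and ad_A unipotent on [𝔤,𝔤] (i.e., ad_A − id is nilpotent on [𝔤,𝔤]). Then there is a one-parameter family φ_t ∈ GL(𝔤) such that the Lie brackets φ_t^{-1}[φ_t X, φ_t Y] converge as t → ∞ to the bracket of 𝔟(n,ℝ) = ℝ^{n−1} ⋊_1 ℝ (the abelian algebra ℝ^{n−1} extended by a derivation acting as the identity). -/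
/-!
Write `𝔤 = I ⊕ ℝA` with `I = [𝔤,𝔤]`. Since `I` is abelian,
`[x + aA, y + bA] = a • T y - b • T x` with `T = ad A|_I`, so the bracket is determined by `T`,
and `𝔟(n,ℝ)` is the case `T = id`. It therefore suffices to conjugate the unipotent `T` within
`GL(I)` (keeping `A` fixed) towards the identity. Choose a basis `(b i)` of `I` and degrees `d i`
such that `T - 1` strictly lowers degrees, and scale `b i` by `exp (-(d i * t))`: the coefficients
of the conjugated `T - 1` pick up factors `exp ((d i - d j) * t)` with `d i < d j`, which tend to 0.
-/

open Module Submodule Filter Topology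

theorem Module.End.exists_basis_lowering_of_pow_eq_zero {K V : Type*} [Field K]
    [AddCommGroup V] [Module K V] [FiniteDimensional K V] (k : ℕ) (N : V →ₗ[K] V)
    (hN : N ^ k = 0) :
    ∃ (ι : Type) (_ : Fintype ι) (b : Basis ι K V) (d : ι → ℕ),
      (∀ i, d i < k) ∧ ∀ j, N (b j) ∈ span K (b '' {i | d i < d j}) := by
  induction k generalizing V with
  | zero =>
    have : Subsingleton V := subsingleton_of_forall_eq 0 fun v => by
      simpa using LinearMap.congr_fun hN v
    exact ⟨Empty, inferInstance, Basis.empty V, Empty.elim, Empty.rec, Empty.rec⟩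
  | succ k ih =>
    -- `N` is nilpotent of order `k` on its range; put the vectors of a complement of the
    -- range in the top degree `k`.
    set R := LinearMap.range N
    have hNR : ∀ v ∈ R, N v ∈ R := fun v _ => LinearMap.mem_range_self N v
    have hNk : N.restrict hNR ^ k = 0 := by
      ext ⟨_, v, rfl⟩
      rw [Module.End.pow_restrict, LinearMap.restrict_apply]
      simpa [← Module.End.mul_apply, ← pow_succ] using LinearMap.congr_fun hN v
    obtain ⟨ι, _, b', d', hd'k, hb'⟩ := ih (N.restrict hNR) hNk
    obtain ⟨C, hC⟩ := R.exists_isCompl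
    let b := ((b'.prod (finBasis K C)).map (prodEquivOfIsCompl R C hC))
    have hb_inl : ∀ i, b (Sum.inl i) = b' i := by simp [b]
    let d : ι ⊕ Fin (finrank K C) → ℕ := Sum.elim d' fun _ => k
    have hlift : ∀ (s : Set ι) (v : R), v ∈ span K (b' '' s) →
        (v : V) ∈ span K (b '' (Sum.inl '' s)) := by
      intro s v hv
      have := mem_map_of_mem (f := R.subtype) hv
      rw [map_span, Set.image_image] at this
      rw [Set.image_image]
      simpa only [hb_inl, Submodule.subtype_apply] using this
    refine ⟨_, inferInstance, b, d, ?_, ?_⟩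
    · rintro (i | i)
      exacts [(hd'k i).trans k.lt_succ_self, k.lt_succ_self]
    rintro (j | j)
    · have := hlift _ _ (hb' j)
      rw [LinearMap.coe_restrict_apply, ← hb_inl] at this
      refine span_mono (Set.image_mono ?_) this
      rintro _ ⟨i, hi, rfl⟩
      exact hi
    · refine span_mono (Set.image_mono ?_)
        (hlift Set.univ ⟨_, LinearMap.mem_range_self N (b (Sum.inr j))⟩ (by simp [b'.span_eq]))
      rintro _ ⟨i, -, rfl⟩
      exact hd'k i

namespace Module.Basis

variable {ι V : Type*} [AddCommGroup V] [Module ℝ V]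

noncomputable def expScaling (b : Basis ι ℝ V) (d : ι → ℕ) (t : ℝ) : V ≃ₗ[ℝ] V :=
  b.equiv (b.unitsSMul fun i => Units.mk0 (Real.exp (-(d i * t))) (Real.exp_ne_zero _))
    (Equiv.refl ι)

variable (b : Basis ι ℝ V) (d : ι → ℕ) (t : ℝ)

theorem expScaling_apply (i : ι) : b.expScaling d t (b i) = Real.exp (-(d i * t)) • b i := by
  simp [expScaling, unitsSMul_apply]

theorem expScaling_symm_apply (i : ι) :
    (b.expScaling d t).symm (b i) = Real.exp (d i * t) • b i := by
  rw [LinearEquiv.symm_apply_eq, map_smul, expScaling_apply, smul_smul, ← Real.exp_add]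
  simp

variable [Fintype ι]

theorem expScaling_symm_conj_apply (N : V →ₗ[ℝ] V) (j : ι) :
    (b.expScaling d t).symm (N (b.expScaling d t (b j))) =
      ∑ i, (Real.exp ((d i - d j) * t) * b.repr (N (b j)) i) • b i := by
  conv_lhs => rw [expScaling_apply, map_smul, ← b.sum_repr (N (b j))]
  simp only [map_smul, map_sum, expScaling_symm_apply, Finset.smul_sum, smul_smul]
  refine Finset.sum_congr rfl fun i _ => ?_
  rw [mul_comm _ (Real.exp _), ← mul_assoc, ← Real.exp_add]
  ring_nf

variable {W : Type*} [AddCommGroup W] [Module ℝ W] [TopologicalSpace W] [ContinuousAdd W]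
  [ContinuousSMul ℝ W]

theorem tendsto_expScaling_symm_conj {N : V →ₗ[ℝ] V}
    (hN : ∀ i j, b.repr (N (b j)) i ≠ 0 → d i < d j) (g : V →ₗ[ℝ] W) (v : V) :
    Tendsto (fun t => g ((b.expScaling d t).symm (N (b.expScaling d t v)))) atTop (𝓝 0) := by
  have hcoeff : ∀ i j, Tendsto (fun t => Real.exp ((d i - d j) * t) * b.repr (N (b j)) i)
      atTop (𝓝 0) := by
    intro i j
    by_cases hij : b.repr (N (b j)) i = 0
    · simp [hij]
    have hneg : (d i - d j : ℝ) < 0 := sub_neg.2 (mod_cast hN i j hij)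
    simpa using (Real.tendsto_exp_atBot.comp
      (tendsto_id.const_mul_atTop_of_neg hneg)).mul_const (b.repr (N (b j)) i)
  have hbasis : ∀ j, Tendsto (fun t => g ((b.expScaling d t).symm (N (b.expScaling d t (b j)))))
      atTop (𝓝 0) := by
    intro j
    simp only [expScaling_symm_conj_apply, map_sum, map_smul]
    simpa using tendsto_finsetSum Finset.univ fun i _ => (hcoeff i j).smul_const (g (b i))
  conv => enter [1, t]; rw [← b.sum_repr v]
  simp only [map_sum, map_smul]
  simpa using tendsto_finsetSum Finset.univ fun j _ => (hbasis j).const_smul (b.repr v j)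

end Module.Basis

namespace Module.End

theorem isNilpotent_restrict_sub_one {R M : Type*} [CommRing R] [AddCommGroup M] [Module R M]
    {f : Module.End R M} {p : Submodule R M} (hf : ∀ x ∈ p, f x ∈ p) {k : ℕ}
    (hk : ∀ y ∈ p, ((f - 1) ^ k) y = 0) : IsNilpotent (f.restrict hf - 1) := by
  have hp : ∀ x ∈ p, (f - 1) x ∈ p := fun x hx => p.sub_mem (hf x hx) hx
  have hres : f.restrict hf - 1 = (f - 1).restrict hp := by
    ext
    simp
  refine ⟨k, ?_⟩
  rw [hres, Module.End.pow_restrict]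
  ext y
  exact hk y y.2

variable {V W : Type*} [AddCommGroup V] [Module ℝ V] [FiniteDimensional ℝ V]
  [AddCommGroup W] [Module ℝ W] [TopologicalSpace W] [ContinuousAdd W] [ContinuousSMul ℝ W]

theorem exists_conj_tendsto_of_isNilpotent_sub_one {T : V →ₗ[ℝ] V}
    (hT : IsNilpotent (T - 1)) :
    ∃ φ : ℝ → V ≃ₗ[ℝ] V, ∀ (g : V →ₗ[ℝ] W) (v : V),
      Tendsto (fun t => g ((φ t).symm (T (φ t v)))) atTop (𝓝 (g v)) := by
  obtain ⟨k, hk⟩ := hT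
  obtain ⟨ι, _, b, d, -, hb⟩ := exists_basis_lowering_of_pow_eq_zero k (T - 1) hk
  have hlow : ∀ i j, b.repr ((T - 1) (b j)) i ≠ 0 → d i < d j := fun i j h =>
    b.mem_span_image.1 (hb j) (Finsupp.mem_support_iff.2 h)
  refine ⟨b.expScaling d, fun g v => ?_⟩
  have := (b.tendsto_expScaling_symm_conj d hlow g v).const_add (g v)
  rw [add_zero] at this
  refine this.congr fun t => ?_
  simp [map_sub]

end Module.End

noncomputable def Submodule.prodEquivOfNotMem {K V : Type*} [Field K] [AddCommGroup V]
    [Module K V] (S : Submodule K V) {A : V} (hA : A ∉ S)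
    (hspan : ∀ x : V, ∃ c : K, ∃ y ∈ S, x = c • A + y) : (S × K) ≃ₗ[K] V :=
  LinearEquiv.ofBijective (S.subtype.coprod (LinearMap.toSpanSingleton K V A)) <| by
    refine ⟨(injective_iff_map_eq_zero _).2 fun ⟨y, c⟩ h => ?_, fun x => ?_⟩
    · simp only [LinearMap.coprod_apply, subtype_apply, LinearMap.toSpanSingleton_apply] at h
      have hc : c = 0 := by
        by_contra hc
        refine hA ((S.smul_mem_iff hc).1 ?_)
        rw [eq_neg_of_add_eq_zero_right h]
        exact neg_mem y.2
      subst hc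
      simp_all
    · obtain ⟨c, y, hy, rfl⟩ := hspan x
      exact ⟨(⟨y, hy⟩, c), add_comm _ _⟩

@[simp]
theorem Submodule.prodEquivOfNotMem_apply {K V : Type*} [Field K] [AddCommGroup V]
    [Module K V] (S : Submodule K V) {A : V} (hA : A ∉ S)
    (hspan : ∀ x : V, ∃ c : K, ∃ y ∈ S, x = c • A + y) (y : S) (c : K) :
    S.prodEquivOfNotMem hA hspan (y, c) = y + c • A :=
  rfl

theorem lie_add_smul_add_smul_of_lie_eq_zero {R L : Type*} [CommRing R] [LieRing L]
    [LieAlgebra R L] {x y : L} (hxy : ⁅x, y⁆ = 0) (A : L) (a b : R) :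
    ⁅x + a • A, y + b • A⁆ = a • ⁅A, y⁆ - b • ⁅A, x⁆ := by
  rw [← lie_skew A x]
  simp only [add_lie, lie_add, smul_lie, lie_smul, hxy, lie_self, smul_zero]
  module

theorem stmt_11_general (n : ℕ) (L : Type) [LieRing L] [LieAlgebra ℝ L]
    [FiniteDimensional ℝ L] (hdim : Module.finrank ℝ L = n)
    (A : L) (hA : A ∉ LieAlgebra.derivedSeries ℝ L 1)
    (hspan : ∀ x : L, ∃ c : ℝ, ∃ y ∈ LieAlgebra.derivedSeries ℝ L 1, x = c • A + y)
    (habel : ∀ x ∈ LieAlgebra.derivedSeries ℝ L 1,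
      ∀ y ∈ LieAlgebra.derivedSeries ℝ L 1, ⁅x, y⁆ = (0 : L))
    (hunip : ∃ k : ℕ, ∀ y ∈ LieAlgebra.derivedSeries ℝ L 1,
      (((LieAlgebra.ad ℝ L A - LinearMap.id : Module.End ℝ L)) ^ k) y = 0) :
    ∃ (φ : ℝ → (L ≃ₗ[ℝ] L)) (ψ : L ≃ₗ[ℝ] ((Fin (n - 1) → ℝ) × ℝ)),
      ∀ X Y : L, Filter.Tendsto
        (fun t : ℝ => ψ ((φ t).symm ⁅(φ t) X, (φ t) Y⁆)) Filter.atTop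
        (nhds ((ψ X).2 • (ψ Y).1 - (ψ Y).2 • (ψ X).1, (0 : ℝ))) := by
  set I := LieAlgebra.derivedSeries ℝ L 1
  let S : Submodule ℝ L := I.toSubmodule
  let χ := S.prodEquivOfNotMem hA hspan
  have hrank : finrank ℝ S = n - 1 := by
    have := χ.finrank_eq
    rw [finrank_prod, finrank_self, hdim] at this
    omega
  let E := (finBasisOfFinrankEq ℝ S hrank).equivFun
  let T : S →ₗ[ℝ] S := (LieAlgebra.ad ℝ L A).restrict fun _ hx => I.lie_mem hx
  have hT_apply : ∀ y : S, (T y : L) = ⁅A, (y : L)⁆ := fun _ => rfl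
  obtain ⟨k, hk⟩ := hunip
  obtain ⟨φS, hφS⟩ := Module.End.exists_conj_tendsto_of_isNilpotent_sub_one
    (W := Fin (n - 1) → ℝ) (Module.End.isNilpotent_restrict_sub_one _ hk)
  have hbracket : ∀ (x y : S) (a b : ℝ), ⁅χ (x, a), χ (y, b)⁆ = χ (a • T y - b • T x, 0) := by
    intro x y a b
    simp only [χ, prodEquivOfNotMem_apply,
      lie_add_smul_add_smul_of_lie_eq_zero (habel x x.2 y y.2)]
    simp [hT_apply]
  refine ⟨fun t => χ.symm ≪≫ₗ (φS t).prodCongr (LinearEquiv.refl ℝ ℝ) ≪≫ₗ χ,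
    χ.symm ≪≫ₗ E.prodCongr (LinearEquiv.refl ℝ ℝ), fun X Y => ?_⟩
  obtain ⟨⟨x, a⟩, rfl⟩ := χ.surjective X
  obtain ⟨⟨y, b⟩, rfl⟩ := χ.surjective Y
  simp only [LinearEquiv.trans_apply, LinearEquiv.trans_symm, LinearEquiv.symm_symm,
    LinearEquiv.prodCongr_apply, LinearEquiv.prodCongr_symm, LinearEquiv.refl_apply,
    LinearEquiv.refl_symm, LinearEquiv.symm_apply_apply, hbracket, map_sub, map_smul]
  exact (((hφS E y).const_smul a).sub ((hφS E x).const_smul b)).prodMk_nhds tendsto_const_nhds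

/-- If a real Lie algebra decomposes as `[𝔤,𝔤] ⊕ ℝA` with `[𝔤,𝔤]` abelian and
`ad A` unipotent on `[𝔤,𝔤]`, then it contracts to `𝔟(n,ℝ) = ℝ^{n-1} ⋊₁ ℝ`:
there are `φ t ∈ GL(𝔤)` and a linear identification `ψ` with `ℝ^{n-1} × ℝ` such that
`φ t⁻¹ [φ t X, φ t Y] → ψ⁻¹ [ψ X, ψ Y]_{𝔟(n,ℝ)}` as `t → ∞`. -/
theorem stmt_11 (n : ℕ) (hn : 2 ≤ n) (L : Type) [LieRing L] [LieAlgebra ℝ L]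
    [FiniteDimensional ℝ L] (hdim : Module.finrank ℝ L = n)
    (A : L) (hA : A ∉ LieAlgebra.derivedSeries ℝ L 1)
    (hspan : ∀ x : L, ∃ c : ℝ, ∃ y ∈ LieAlgebra.derivedSeries ℝ L 1, x = c • A + y)
    (habel : ∀ x ∈ LieAlgebra.derivedSeries ℝ L 1,
      ∀ y ∈ LieAlgebra.derivedSeries ℝ L 1, ⁅x, y⁆ = (0 : L))
    (hunip : ∃ k : ℕ, ∀ y ∈ LieAlgebra.derivedSeries ℝ L 1,
      (((LieAlgebra.ad ℝ L A - LinearMap.id : Module.End ℝ L)) ^ k) y = 0) :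
    ∃ (φ : ℝ → (L ≃ₗ[ℝ] L)) (ψ : L ≃ₗ[ℝ] ((Fin (n - 1) → ℝ) × ℝ)),
      ∀ X Y : L, Filter.Tendsto
        (fun t : ℝ => ψ ((φ t).symm ⁅(φ t) X, (φ t) Y⁆)) Filter.atTop
        (nhds ((ψ X).2 • (ψ Y).1 - (ψ Y).2 • (ψ X).1, (0 : ℝ))) :=
  stmt_11_general n L hdim A hA hspan habel hunip
end

section
/- Let 𝔤₀ be a real Lie algebra, 𝔱 an abelian Lie algebra of semisimple derivations of 𝔤₀, and τ : 𝔤₀ → 𝔱 a linear map whose graph 𝔤 = {X + τ(X) : X ∈ 𝔤₀} is a Lie subalgebra of 𝔤₀ ⋊ 𝔱 satisfying [𝔤, τ(𝔤₀)] ⊆ 𝔤 (a twisting; this forces τ to be a Lie algebra homomorphism vanishing on brackets appropriately). Define ω_τ(X ∧ Y) = [τ(X), Y] + [X, τ(Y)] for X, Y ∈ 𝔤₀. Then ω_τ is a 2-cocycle in the Chevalley–Eilenberg complex of 𝔤₀ with values in the adjoint module: d'ω_τ = 0. -/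
theorem stmt_14_general (L : Type) [LieRing L] [LieAlgebra ℝ L]
    (τ : L →ₗ[ℝ] (L →ₗ[ℝ] L))
    (hder : ∀ X Y Z : L, τ X ⁅Y, Z⁆ = ⁅τ X Y, Z⁆ + ⁅Y, τ X Z⁆)
    (hhom : ∀ X Y : L, τ ⁅X, Y⁆ = 0) :
    ∀ X Y Z : L,
      ⁅X, τ Y Z - τ Z Y⁆ + ⁅Y, τ Z X - τ X Z⁆ + ⁅Z, τ X Y - τ Y X⁆
        - (τ ⁅X, Y⁆ Z - τ Z ⁅X, Y⁆)
        - (τ ⁅Z, X⁆ Y - τ Y ⁅Z, X⁆)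
        - (τ ⁅Y, Z⁆ X - τ X ⁅Y, Z⁆) = 0 := by
  intro X Y Z
  -- `τ` kills brackets, and expanding `τ X ⁅Y, Z⁆` by the Leibniz rule cancels the cyclic terms.
  simp only [hhom, hder, LinearMap.zero_apply, lie_sub]
  rw [← lie_skew (τ Z X) Y, ← lie_skew (τ Y Z) X, ← lie_skew (τ X Y) Z]
  abel

/-- For a twisting map `τ` (valued in an abelian algebra of semisimple derivations,
vanishing on brackets and on its own images), the 2-form
`ω_τ(X,Y) = [τ(X),Y] + [X,τ(Y)] = τ(X)·Y − τ(Y)·X` is a Chevalley–Eilenberg 2-cocycle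
with values in the adjoint module: `d'ω_τ = 0`. -/
theorem stmt_14 (L : Type) [LieRing L] [LieAlgebra ℝ L]
    (τ : L →ₗ[ℝ] (L →ₗ[ℝ] L))
    (hder : ∀ X Y Z : L, τ X ⁅Y, Z⁆ = ⁅τ X Y, Z⁆ + ⁅Y, τ X Z⁆)
    (habel : ∀ X Y Z : L, τ X (τ Y Z) = τ Y (τ X Z))
    (hss : ∀ X : L, Module.End.IsSemisimple (τ X : Module.End ℝ L))
    (hhom : ∀ X Y : L, τ ⁅X, Y⁆ = 0)
    (htwist : ∀ X Y : L, τ (τ X Y) = 0) :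
    ∀ X Y Z : L,
      ⁅X, τ Y Z - τ Z Y⁆ + ⁅Y, τ Z X - τ X Z⁆ + ⁅Z, τ X Y - τ Y X⁆
        - (τ ⁅X, Y⁆ Z - τ Z ⁅X, Y⁆)
        - (τ ⁅Z, X⁆ Y - τ Y ⁅Z, X⁆)
        - (τ ⁅Y, Z⁆ X - τ X ⁅Y, Z⁆) = 0 :=
  stmt_14_general L τ hder hhom
end

section
/- Define μ + ω_τ/t on the underlying vector space of 𝔤₀ (with μ the bracket of 𝔤₀ and ω_τ as above). Then λ(1) = μ + ω_τ is a Lie bracket isomorphic to the twisting 𝔤 (as the graph of τ in 𝔤₀ ⋊ 𝔱), and λ(t) = μ + ω_τ/t is a Lie bracket for all t ≠ 0. -/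
/-!
Write `λ(t) = μ + s ω_τ` with `s = 1 / t`. For any bilinear `ω`, the Jacobiator of `μ + s ω` is
`s • dω + s² • Jac(ω)`, where `dω` is the Chevalley–Eilenberg differential of `ω` with adjoint
coefficients. For `ω = ω_τ`, `dω_τ = 0` because each `τ X` is a derivation and `τ` kills
`[𝔤₀, 𝔤₀]`, and `Jac(ω_τ) = 0` because the `τ X` commute and `τ` kills its own image.
The pair on the left of the second claim is the bracket `[(X, τ X), (Y, τ Y)]` in `𝔤₀ ⋊ 𝔱`;
its second component vanishes since `𝔱` is abelian, and so does `τ (λ(1) X Y)`.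
-/

section LinearDeformation

variable {R L : Type*} [CommRing R] [LieRing L] [LieAlgebra R L]

theorem lie_lie_add_lie_lie_add_lie_lie (X Y Z : L) :
    ⁅⁅X, Y⁆, Z⁆ + ⁅⁅Y, Z⁆, X⁆ + ⁅⁅Z, X⁆, Y⁆ = 0 := by
  rw [← lie_skew ⁅X, Y⁆ Z, ← lie_skew ⁅Y, Z⁆ X, ← lie_skew ⁅Z, X⁆ Y]
  linear_combination (norm := abel) -lie_jacobi X Y Z

variable (ω : L →ₗ[R] L →ₗ[R] L) (s : R)

theorem lie_add_smul_self (hω : ω.IsAlt) (X : L) : ⁅X, X⁆ + s • ω X X = 0 := by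
  rw [lie_self, hω.self_eq_zero, smul_zero, add_zero]

theorem lie_add_smul_swap (hω : ω.IsAlt) (X Y : L) :
    ⁅X, Y⁆ + s • ω X Y = -(⁅Y, X⁆ + s • ω Y X) := by
  rw [neg_add, ← smul_neg, hω.neg, lie_skew]

theorem lie_add_smul_jacobi
    (hcocycle : ∀ X Y Z : L, ω ⁅X, Y⁆ Z + ω ⁅Y, Z⁆ X + ω ⁅Z, X⁆ Y
      + (⁅ω X Y, Z⁆ + ⁅ω Y Z, X⁆ + ⁅ω Z X, Y⁆) = 0)
    (hjacobi : ∀ X Y Z : L, ω (ω X Y) Z + ω (ω Y Z) X + ω (ω Z X) Y = 0) (X Y Z : L) :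
    let b : L → L → L := fun X Y => ⁅X, Y⁆ + s • ω X Y
    b (b X Y) Z + b (b Y Z) X + b (b Z X) Y = 0 := by
  intro b
  simp only [b, map_add, map_smul, LinearMap.add_apply, LinearMap.smul_apply, add_lie, smul_lie]
  linear_combination (norm := module)
    lie_lie_add_lie_lie_add_lie_lie X Y Z + s • hcocycle X Y Z + (s * s) • hjacobi X Y Z

end LinearDeformation

section Twisting

variable {R L : Type*} [CommRing R] [LieRing L] [LieAlgebra R L] (τ : L →ₗ[R] L →ₗ[R] L)

/-- `ω_τ(X, Y) = [τ X, Y] + [X, τ Y]`, computed in `𝔤₀ ⋊ 𝔱`, is `τ X Y - τ Y X ∈ 𝔤₀`. -/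
def twistCocycle : L →ₗ[R] L →ₗ[R] L := τ - τ.flip

theorem twistCocycle_apply (X Y : L) : twistCocycle τ X Y = τ X Y - τ Y X := rfl

theorem isAlt_twistCocycle : (twistCocycle τ).IsAlt := fun X => sub_self (τ X X)

theorem twistCocycle_cocycle (hder : ∀ X Y Z : L, τ X ⁅Y, Z⁆ = ⁅τ X Y, Z⁆ + ⁅Y, τ X Z⁆)
    (hhom : ∀ X Y : L, τ ⁅X, Y⁆ = 0) (X Y Z : L) :
    twistCocycle τ ⁅X, Y⁆ Z + twistCocycle τ ⁅Y, Z⁆ X + twistCocycle τ ⁅Z, X⁆ Y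
      + (⁅twistCocycle τ X Y, Z⁆ + ⁅twistCocycle τ Y Z, X⁆ + ⁅twistCocycle τ Z X, Y⁆) = 0 := by
  simp only [twistCocycle_apply, hhom, hder, LinearMap.zero_apply, sub_lie]
  rw [← lie_skew X (τ Z Y), ← lie_skew Y (τ X Z), ← lie_skew Z (τ Y X)]
  abel

theorem twistCocycle_jacobi (habel : ∀ X Y Z : L, τ X (τ Y Z) = τ Y (τ X Z))
    (htwist : ∀ X Y : L, τ (τ X Y) = 0) (X Y Z : L) :
    twistCocycle τ (twistCocycle τ X Y) Z + twistCocycle τ (twistCocycle τ Y Z) X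
      + twistCocycle τ (twistCocycle τ Z X) Y = 0 := by
  simp only [twistCocycle_apply, map_sub, htwist, LinearMap.sub_apply, LinearMap.zero_apply]
  rw [habel Z X Y, habel Z Y X, habel X Y Z]
  abel

theorem map_lie_add_twistCocycle (hhom : ∀ X Y : L, τ ⁅X, Y⁆ = 0)
    (htwist : ∀ X Y : L, τ (τ X Y) = 0) (X Y : L) : τ (⁅X, Y⁆ + twistCocycle τ X Y) = 0 := by
  rw [map_add, twistCocycle_apply, map_sub, hhom, htwist, htwist, sub_self, add_zero]

end Twisting

/-- The linear expansion `λ(t) = μ + ω_τ / t` of the twisting cocycle: `λ(t)` is a Lie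
bracket for every `t ≠ 0`, and `X ↦ (X, τ X)` identifies `λ(1)` with the bracket of the
graph of `τ` inside the semidirect product `𝔤₀ ⋊ 𝔱` (whose bracket on pairs is
`[(x,f),(y,g)] = ([x,y] + f y − g x, f∘g − g∘f)`). -/
theorem stmt_15 (L : Type) [LieRing L] [LieAlgebra ℝ L]
    (τ : L →ₗ[ℝ] (L →ₗ[ℝ] L))
    (hder : ∀ X Y Z : L, τ X ⁅Y, Z⁆ = ⁅τ X Y, Z⁆ + ⁅Y, τ X Z⁆)
    (habel : ∀ X Y Z : L, τ X (τ Y Z) = τ Y (τ X Z))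
    (hhom : ∀ X Y : L, τ ⁅X, Y⁆ = 0)
    (htwist : ∀ X Y : L, τ (τ X Y) = 0) :
    let lam : ℝ → L → L → L := fun t X Y => ⁅X, Y⁆ + (1 / t) • (τ X Y - τ Y X)
    (∀ t : ℝ, t ≠ 0 →
      (∀ X : L, lam t X X = 0) ∧
      (∀ X Y : L, lam t X Y = -lam t Y X) ∧
      (∀ X Y Z : L,
        lam t (lam t X Y) Z + lam t (lam t Y Z) X + lam t (lam t Z X) Y = 0)) ∧
    (∀ X Y : L,
      (⁅X, Y⁆ + τ X Y - τ Y X, τ X ∘ₗ τ Y - τ Y ∘ₗ τ X)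
        = (lam 1 X Y, τ (lam 1 X Y))) := by
  intro lam
  refine ⟨fun t _ => ⟨lie_add_smul_self _ _ (isAlt_twistCocycle τ),
    lie_add_smul_swap _ _ (isAlt_twistCocycle τ),
    lie_add_smul_jacobi _ _ (twistCocycle_cocycle τ hder hhom)
      (twistCocycle_jacobi τ habel htwist)⟩, fun X Y => ?_⟩
  have hlam : lam 1 X Y = ⁅X, Y⁆ + twistCocycle τ X Y := by
    simp only [lam, one_div, inv_one, one_smul, twistCocycle_apply]
  have hcomm : τ X ∘ₗ τ Y - τ Y ∘ₗ τ X = 0 := LinearMap.ext fun Z => sub_eq_zero.2 (habel X Y Z)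
  rw [hlam, map_lie_add_twistCocycle τ hhom htwist, hcomm, twistCocycle_apply, add_sub_assoc]
end

section
/- Assume the four exponentials conjecture. Let p, q, p', q' be integers with p, p' ≥ 5 and q, q' ≥ 3, and suppose 1 + log(q−1)/arccosh((p−2)/2) = 1 + log(q'−1)/arccosh((p'−2)/2). Then there exist positive integers M, N such that (q−1)^N = (q'−1)^M and T_N((p−2)/2) = T_M((p'−2)/2), where T_k is the k-th Chebyshev polynomial of the first kind. -/
/-!
Write `L = log (q - 1)`, `a = arccosh x` with `x = (p - 2) / 2`, and `z = L' / L = a' / a`.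
The four numbers `e^L = q - 1`, `e^a = x + √(x² - 1)`, `e^{zL} = q' - 1`, `e^{za}` are algebraic.
The pair `(L, a)` is `ℚ`-independent: `n L = m a` with `m > 0` would make the rational number
`(q - 1)^n` equal to `(x + √(x² - 1))^m = A + B √(x² - 1)` with `B > 0`, although `√(x² - 1)`
is irrational because `(p - 3)² < (p - 2)² - 4 < (p - 2)²`. So the conjecture, applied to
`(1, z)` and `(L, a)`, forces `z = N / M ∈ ℚ`. Then `N L = M L'` gives `(q - 1)^N = (q' - 1)^M`,
and `N a = M a'` gives `T_N(cosh a) = cosh (N a) = cosh (M a') = T_M(cosh a')`.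
-/

/-- `arccosh x = log (x + √(x² − 1))`. -/
noncomputable def arccosh (x : ℝ) : ℝ := Real.log (x + Real.sqrt (x ^ 2 - 1))

/-- The four exponentials conjecture: if `β₁, β₂` are `ℚ`-linearly independent and
`z₁, z₂` are `ℚ`-linearly independent complex numbers, then at least one of the four
numbers `e^{βᵢ zⱼ}` is transcendental. -/
def FourExponentialsConjecture : Prop :=
  ∀ β₁ β₂ z₁ z₂ : ℂ,
    LinearIndependent ℚ ![β₁, β₂] → LinearIndependent ℚ ![z₁, z₂] →
      (Transcendental ℚ (Complex.exp (β₁ * z₁)) ∨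
        Transcendental ℚ (Complex.exp (β₁ * z₂)) ∨
        Transcendental ℚ (Complex.exp (β₂ * z₁)) ∨
        Transcendental ℚ (Complex.exp (β₂ * z₂)))

open Real Polynomial Chebyshev

lemma arccosh_eq_arcosh : arccosh = arcosh := rfl

lemma exists_natCast_eq_mul {K : Type*} [Field K] [CharZero K] {r : ℚ} (hr : 0 < r) :
    ∃ m n : ℕ, 0 < m ∧ 0 < n ∧ (n : K) = r * m := by
  refine ⟨r.den, r.num.toNat, r.den_pos, by simpa using Rat.num_pos.2 hr, ?_⟩
  have h := congrArg (Rat.cast : ℚ → K) r.mul_den_eq_num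
  push_cast at h
  rw [h]
  exact_mod_cast Int.toNat_of_nonneg (Rat.num_nonneg.2 hr.le)

lemma pow_eq_pow_of_mul_log_eq {b c : ℝ} (hb : 0 < b) (hc : 0 < c) {m n : ℕ}
    (h : m * log b = n * log c) : b ^ m = c ^ n := by
  rw [← exp_log hb, ← exp_log hc, ← exp_nat_mul, ← exp_nat_mul, h]

lemma linearIndependent_ofReal_pair {u v : ℝ} (h : Irrational (v / u)) :
    LinearIndependent ℚ ![(u : ℂ), (v : ℂ)] := by
  have hu : u ≠ 0 := by
    rintro rfl
    simp at h
  rw [LinearIndependent.pair_iff' (Complex.ofReal_ne_zero.2 hu)]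
  intro r hr
  rw [Rat.smul_def, ← Complex.ofReal_ratCast, ← Complex.ofReal_mul,
    Complex.ofReal_inj] at hr
  exact h.ne_rat r (by rw [← hr, mul_div_cancel_right₀ _ hu])

theorem FourExponentialsConjecture.exists_ratCast_eq (hconj : FourExponentialsConjecture)
    {u v z : ℝ} (huv : Irrational (v / u)) (hu : IsAlgebraic ℚ (exp u))
    (hv : IsAlgebraic ℚ (exp v)) (hzu : IsAlgebraic ℚ (exp (z * u)))
    (hzv : IsAlgebraic ℚ (exp (z * v))) : ∃ r : ℚ, (r : ℝ) = z := by
  by_contra hz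
  have h1z : LinearIndependent ℚ ![1, (z : ℂ)] := by
    simpa using linearIndependent_ofReal_pair (u := 1) (v := z) (by rwa [div_one])
  have hexp {w : ℝ} (hw : IsAlgebraic ℚ (exp w)) : ¬Transcendental ℚ (Complex.exp w) := by
    rw [← Complex.ofReal_exp]
    exact not_not.2 hw.algebraMap
  rcases hconj 1 z u v h1z (linearIndependent_ofReal_pair huv) with h | h | h | h
  · exact hexp hu (by simpa using h)
  · exact hexp hv (by simpa using h)
  · exact hexp hzu (by simpa using h)
  · exact hexp hzv (by simpa using h)

lemma isAlgebraic_exp_arccosh {x : ℝ} (hx : 1 ≤ x) (halg : IsAlgebraic ℚ x) :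
    IsAlgebraic ℚ (exp (arccosh x)) := by
  rw [arccosh_eq_arcosh, exp_arcosh hx]
  refine halg.add (IsAlgebraic.of_pow two_pos ?_)
  rw [sq_sqrt (by nlinarith)]
  exact (halg.pow 2).sub isAlgebraic_one

lemma exists_add_sqrt_sq_sub_one_pow_eq {x : ℚ} (hx : 1 ≤ x) {k : ℕ} (hk : 0 < k) :
    ∃ A B : ℚ, 0 < A ∧ 0 < B ∧
      ((x : ℝ) + √((x : ℝ) ^ 2 - 1)) ^ k = A + B * √((x : ℝ) ^ 2 - 1) := by
  have hx0 : (0 : ℚ) ≤ x ^ 2 - 1 := by nlinarith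
  have hs : √((x : ℝ) ^ 2 - 1) ^ 2 = (x : ℝ) ^ 2 - 1 := sq_sqrt (by exact_mod_cast hx0)
  induction k, hk using Nat.le_induction with
  | base => exact ⟨x, 1, by linarith, one_pos, by push_cast; ring⟩
  | succ k _ ih =>
    obtain ⟨A, B, hA, hB, h⟩ := ih
    refine ⟨A * x + B * (x ^ 2 - 1), A + B * x, by nlinarith [mul_nonneg hB.le hx0],
      by nlinarith, ?_⟩
    rw [pow_succ, h]
    push_cast
    linear_combination (B : ℝ) * hs

lemma irrational_add_sqrt_sq_sub_one_pow {x : ℚ} (hx : 1 ≤ x)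
    (hs : Irrational √((x : ℝ) ^ 2 - 1)) {k : ℕ} (hk : 0 < k) :
    Irrational (((x : ℝ) + √((x : ℝ) ^ 2 - 1)) ^ k) := by
  obtain ⟨A, B, -, hB, h⟩ := exists_add_sqrt_sq_sub_one_pow_eq hx hk
  rw [h]
  exact (hs.ratCast_mul hB.ne').ratCast_add A

lemma irrational_sqrt_half_sq_sub_one {n : ℤ} (hn : 3 ≤ n) :
    Irrational √(((n : ℝ) / 2) ^ 2 - 1) := by
  have hsq : ¬IsSquare (n ^ 2 - 4) := by
    rintro ⟨m, hm⟩
    have hm' : |m| ^ 2 = n ^ 2 - 4 := by rw [sq_abs, hm, sq]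
    rcases le_or_gt |m| (n - 1) with h | h <;> nlinarith [abs_nonneg m]
  have hirr : Irrational √((n ^ 2 - 4 : ℤ) : ℝ) :=
    irrational_sqrt_intCast_iff.2 ⟨hsq, by nlinarith⟩
  have h4 : ((n : ℝ) / 2) ^ 2 - 1 = ((n ^ 2 - 4 : ℤ) : ℝ) / 2 ^ 2 := by push_cast; ring
  rw [h4, sqrt_div' _ (by positivity), sqrt_sq two_pos.le]
  exact_mod_cast hirr.div_natCast two_ne_zero

lemma irrational_arccosh_div_log {x : ℚ} (hx : 1 < x) (hs : Irrational √((x : ℝ) ^ 2 - 1))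
    {d : ℚ} (hd : 1 < d) : Irrational (arccosh x / log d) := by
  rintro ⟨r, hr⟩
  have ha : 0 < arccosh x := arcosh_pos (by exact_mod_cast hx)
  have hL : 0 < log d := log_pos (by exact_mod_cast hd)
  obtain ⟨m, n, hm, -, hnm⟩ := exists_natCast_eq_mul (K := ℝ)
    (show 0 < r by exact_mod_cast hr ▸ div_pos ha hL)
  have hlog : n * log d = m * log (exp (arccosh x)) := by
    rw [log_exp, hnm, hr]
    field_simp
  have hpow := pow_eq_pow_of_mul_log_eq (by positivity) (exp_pos _) hlog
  rw [arccosh_eq_arcosh, exp_arcosh (by exact_mod_cast hx.le)] at hpow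
  exact (irrational_add_sqrt_sq_sub_one_pow hx.le hs hm).ne_rat (d ^ n) (by
    rw [← hpow]; push_cast; rfl)

theorem exists_pow_eq_pow_and_T_eval_eq (hconj : FourExponentialsConjecture)
    {x x' d d' : ℚ} (hx : 1 < x) (hx' : 1 < x') (hs : Irrational √((x : ℝ) ^ 2 - 1))
    (hd : 1 < d) (hd' : 1 < d') (heq : log d / arccosh x = log d' / arccosh x') :
    ∃ M N : ℕ, 0 < M ∧ 0 < N ∧ (d : ℝ) ^ N = (d' : ℝ) ^ M ∧
      (T ℝ N).eval (x : ℝ) = (T ℝ M).eval (x' : ℝ) := by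
  set L := log d
  set L' := log d'
  set a := arccosh x
  set a' := arccosh x'
  have hL : 0 < L := log_pos (by exact_mod_cast hd)
  have hL' : 0 < L' := log_pos (by exact_mod_cast hd')
  have ha : 0 < a := arcosh_pos (by exact_mod_cast hx)
  have ha' : 0 < a' := arcosh_pos (by exact_mod_cast hx')
  have hzL : L' / L * L = L' := div_mul_cancel₀ _ hL.ne'
  have hza : L' / L * a = a' := by
    rw [div_eq_div_iff ha.ne' ha'.ne'] at heq
    field_simp
    linarith
  have hexp_log {e : ℚ} (he : 1 < e) : IsAlgebraic ℚ (exp (log e)) := by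
    rw [exp_log (by exact_mod_cast zero_lt_one.trans he)]
    exact isAlgebraic_ratCast ℚ e
  have hexp_arccosh {y : ℚ} (hy : 1 < y) : IsAlgebraic ℚ (exp (arccosh y)) :=
    isAlgebraic_exp_arccosh (by exact_mod_cast hy.le) (isAlgebraic_ratCast ℚ y)
  obtain ⟨r, hr⟩ := hconj.exists_ratCast_eq (irrational_arccosh_div_log hx hs hd)
    (hexp_log hd) (hexp_arccosh hx) (by rw [hzL]; exact hexp_log hd')
    (by rw [hza]; exact hexp_arccosh hx')
  have hr0 : (0 : ℝ) < r := hr ▸ div_pos hL' hL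
  obtain ⟨M, N, hM, hN, hNM⟩ := exists_natCast_eq_mul (K := ℝ) (Rat.cast_pos.1 hr0)
  rw [← hr] at hzL hza
  have hNL : N * L = M * L' := by linear_combination L * hNM + M * hzL
  have hNa : N * a = M * a' := by linear_combination a * hNM + M * hza
  refine ⟨M, N, hM, hN, pow_eq_pow_of_mul_log_eq (by positivity) (by positivity) hNL, ?_⟩
  rw [← cosh_arcosh (x := x) (by exact_mod_cast hx.le),
    ← cosh_arcosh (x := x') (by exact_mod_cast hx'.le)]
  exact_mod_cast (T_real_cosh a N).trans ((congrArg cosh hNa).trans (T_real_cosh a' M).symm)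

/-- Conditionally on the four exponentials conjecture: if the conformal dimensions
`1 + log(q−1)/arccosh((p−2)/2)` and `1 + log(q'−1)/arccosh((p'−2)/2)` of the boundaries
of the buildings `I_{p,q}` and `I_{p',q'}` agree, then there exist positive integers
`M, N` with `(q−1)^N = (q'−1)^M` and `T_N((p−2)/2) = T_M((p'−2)/2)`. -/
theorem stmt_16 (hconj : FourExponentialsConjecture)
    (p q p' q' : ℕ) (hp : 5 ≤ p) (hp' : 5 ≤ p') (hq : 3 ≤ q) (hq' : 3 ≤ q')
    (heq : 1 + Real.log ((q : ℝ) - 1) / arccosh (((p : ℝ) - 2) / 2)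
        = 1 + Real.log ((q' : ℝ) - 1) / arccosh (((p' : ℝ) - 2) / 2)) :
    ∃ M N : ℕ, 0 < M ∧ 0 < N ∧
      ((q : ℝ) - 1) ^ N = ((q' : ℝ) - 1) ^ M ∧
      Polynomial.eval (((p : ℝ) - 2) / 2) (Polynomial.Chebyshev.T ℝ N)
        = Polynomial.eval (((p' : ℝ) - 2) / 2) (Polynomial.Chebyshev.T ℝ M) := by
  have hcast_x (p : ℕ) : ((p : ℝ) - 2) / 2 = ((((p : ℤ) - 2 : ℤ) / 2 : ℚ) : ℝ) := by
    push_cast; ring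
  have hcast_d (q : ℕ) : (q : ℝ) - 1 = ((q - 1 : ℚ) : ℝ) := by push_cast; ring
  rw [hcast_x p, hcast_x p', hcast_d q, hcast_d q', add_right_inj] at heq
  rw [hcast_x p, hcast_x p', hcast_d q, hcast_d q']
  have hx_gt {p : ℕ} (hp : 5 ≤ p) : 1 < (((p : ℤ) - 2 : ℤ) / 2 : ℚ) := by
    rw [lt_div_iff₀ two_pos]; push_cast; linarith [show (5 : ℚ) ≤ p by exact_mod_cast hp]
  have hd_gt {q : ℕ} (hq : 3 ≤ q) : 1 < (q - 1 : ℚ) := by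
    linarith [show (3 : ℚ) ≤ q by exact_mod_cast hq]
  refine exists_pow_eq_pow_and_T_eval_eq hconj (hx_gt hp) (hx_gt hp') ?_ (hd_gt hq) (hd_gt hq')
    heq
  have hs := irrational_sqrt_half_sq_sub_one (n := (p : ℤ) - 2) (by omega)
  push_cast at hs ⊢
  exact hs
end

section
/- Let S = ℝ^{n−1} ⋊_α ℝ be a solvable Lie group where α ∈ 𝔤𝔩(n−1,ℝ) has all eigenvalues with real part 1. For the left-invariant metric on the Lie algebra 𝔰 = ℝ^{n−1} ⊕ ℝT (with ad_T = α) making a chosen basis orthonormal, decompose ad_T = D + S with D symmetric and S skew-symmetric, and set N = D² + [D,S]. Then the sectional curvature of any 2-plane π = span(u, v) with v ∈ [𝔰,𝔰] = ℝ^{n−1} is sec(π) = (⟨−D u̲, u̲⟩⟨D v, v⟩ + ⟨D u̲, v⟩² − ⟨u,T⟩²⟨v, N v⟩)/(⟨u,u⟩⟨v,v⟩ − ⟨u,v⟩²), where u̲ denotes the orthogonal projection of u onto ℝ^{n−1}. In particular, if D = I and N = I then sec(π) = −1. -/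
open scoped RealInnerProductSpace

/-!
Since `v ∈ W` is orthogonal to `T` and fixed by `P`, most terms of `R(u, v)v` vanish. Paired
with `u`, vectors of `W` only see the projection `P u`, and symmetry of `D` turns `⟪D v, u⟫` into
`⟪D (P u), v⟫`. When `D` and `N` are the identity on `W`, the numerator is minus the Gram
determinant, since `⟪u, u⟫ = ⟪P u, P u⟫ + ⟪u, T⟫²` and `⟪u, v⟫ = ⟪P u, v⟫`.
-/

namespace SemidirectCurvature

variable {E : Type*} [NormedAddCommGroup E] [InnerProductSpace ℝ E]

def curvature (T : E) (P D N : E →ₗ[ℝ] E) (X Y Z : E) : E :=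
  (-⟪D (P Y), Z⟫) • D (P X) + ⟪D (P X), Z⟫ • D (P Y)
    - ⟪P Z, ⟪X, T⟫ • N (P Y) - ⟪Y, T⟫ • N (P X)⟫ • T
    + ⟪Z, T⟫ • (⟪X, T⟫ • N (P Y) - ⟪Y, T⟫ • N (P X))

variable {W : Submodule ℝ E} {T : E} {P : E →ₗ[ℝ] E}

lemma inner_eq_inner_proj (hTW : ∀ w ∈ W, ⟪T, w⟫ = 0)
    (hdecomp : ∀ x : E, x = P x + ⟪x, T⟫ • T) {w : E} (hw : w ∈ W) (u : E) :
    ⟪w, u⟫ = ⟪w, P u⟫ := by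
  conv_lhs => rw [hdecomp u]
  rw [inner_add_right, real_inner_smul_right, real_inner_comm T w, hTW w hw, mul_zero, add_zero]

lemma inner_self_eq_proj_add_sq (hT : ⟪T, T⟫ = 1) (hTW : ∀ w ∈ W, ⟪T, w⟫ = 0)
    (hPW : ∀ x : E, P x ∈ W) (hdecomp : ∀ x : E, x = P x + ⟪x, T⟫ • T) (u : E) :
    ⟪u, u⟫ = ⟪P u, P u⟫ + ⟪u, T⟫ ^ 2 := by
  have hTPu : ⟪T, P u⟫ = 0 := hTW _ (hPW u)
  conv_lhs => rw [hdecomp u]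
  simp only [inner_add_left, inner_add_right, real_inner_smul_left, real_inner_smul_right,
    real_inner_comm T (P u), hTPu, hT]
  ring

lemma inner_curvature_eq (hTW : ∀ w ∈ W, ⟪T, w⟫ = 0) (hPfix : ∀ w ∈ W, P w = w)
    (hdecomp : ∀ x : E, x = P x + ⟪x, T⟫ • T) {D : E →ₗ[ℝ] E} (N : E →ₗ[ℝ] E)
    (hDsym : ∀ x y : E, ⟪D x, y⟫ = ⟪x, D y⟫) (hDW : ∀ x : E, D x ∈ W)
    (u : E) {v : E} (hv : v ∈ W) :
    ⟪curvature T P D N u v v, u⟫ =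
      ⟪-D (P u), P u⟫ * ⟪D v, v⟫ + ⟪D (P u), v⟫ ^ 2 - ⟪u, T⟫ ^ 2 * ⟪v, N v⟫ := by
  have hvT : ⟪v, T⟫ = 0 := by rw [real_inner_comm]; exact hTW v hv
  have hDPu : ⟪D (P u), u⟫ = ⟪D (P u), P u⟫ := inner_eq_inner_proj hTW hdecomp (hDW _) u
  have hDv : ⟪D v, u⟫ = ⟪D (P u), v⟫ := by
    rw [inner_eq_inner_proj hTW hdecomp (hDW v), hDsym v (P u), real_inner_comm]
  simp only [curvature, hPfix v hv, hvT, zero_smul, sub_zero, add_zero,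
    inner_add_left, inner_sub_left, real_inner_smul_left, inner_neg_left,
    real_inner_smul_right, hDPu, hDv, real_inner_comm u T]
  ring

lemma inner_curvature_eq_neg_gram (hT : ⟪T, T⟫ = 1) (hTW : ∀ w ∈ W, ⟪T, w⟫ = 0)
    (hPW : ∀ x : E, P x ∈ W) (hPfix : ∀ w ∈ W, P w = w)
    (hdecomp : ∀ x : E, x = P x + ⟪x, T⟫ • T) {D N : E →ₗ[ℝ] E}
    (hDsym : ∀ x y : E, ⟪D x, y⟫ = ⟪x, D y⟫) (hDW : ∀ x : E, D x ∈ W)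
    (hD : ∀ w ∈ W, D w = w) (hN : ∀ w ∈ W, N w = w) (u : E) {v : E} (hv : v ∈ W) :
    ⟪curvature T P D N u v v, u⟫ = -(⟪u, u⟫ * ⟪v, v⟫ - ⟪u, v⟫ ^ 2) := by
  rw [inner_curvature_eq hTW hPfix hdecomp N hDsym hDW u hv, hD v hv, hN v hv,
    hD _ (hPW u), inner_self_eq_proj_add_sq hT hTW hPW hdecomp u,
    real_inner_comm v u, inner_eq_inner_proj hTW hdecomp hv u, inner_neg_left,
    real_inner_comm v (P u)]
  ring

end SemidirectCurvature

open SemidirectCurvature in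
/-- Curvature formula for the metric Lie algebra `𝔰 = ℝ^{n−1} ⋊ ℝT`: with `R` given by
the Heintze–Eberlein–Heber formula, the sectional curvature of a plane `span(u,v)` with
`v ∈ W = [𝔰,𝔰]` is
`(⟨−Du̲,u̲⟩⟨Dv,v⟩ + ⟨Du̲,v⟩² − ⟨u,T⟩²⟨v,Nv⟩) / (⟨u,u⟩⟨v,v⟩ − ⟨u,v⟩²)`;
in particular it equals `−1` when `D` and `N` restrict to the identity on `W`. -/
theorem stmt_18 (E : Type) [NormedAddCommGroup E] [InnerProductSpace ℝ E]
    (W : Submodule ℝ E) (T : E)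
    (hT : ⟪T, T⟫ = 1) (hTW : ∀ w ∈ W, ⟪T, w⟫ = 0)
    (P : E →ₗ[ℝ] E) (hPW : ∀ x : E, P x ∈ W)
    (hPfix : ∀ w ∈ W, P w = w)
    (hdecomp : ∀ x : E, x = P x + ⟪x, T⟫ • T)
    (D N : E →ₗ[ℝ] E)
    (hDsym : ∀ x y : E, ⟪D x, y⟫ = ⟪x, D y⟫)
    (hDW : ∀ x : E, D x ∈ W) :
    let Rm : E → E → E → E := fun X Y Z =>
      (-⟪D (P Y), Z⟫) • D (P X) + ⟪D (P X), Z⟫ • D (P Y)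
        - ⟪P Z, ⟪X, T⟫ • N (P Y) - ⟪Y, T⟫ • N (P X)⟫ • T
        + ⟪Z, T⟫ • (⟪X, T⟫ • N (P Y) - ⟪Y, T⟫ • N (P X))
    (∀ u v : E, v ∈ W →
      ⟪Rm u v v, u⟫ / (⟪u, u⟫ * ⟪v, v⟫ - ⟪u, v⟫ ^ 2)
        = (⟪-D (P u), P u⟫ * ⟪D v, v⟫ + ⟪D (P u), v⟫ ^ 2
              - ⟪u, T⟫ ^ 2 * ⟪v, N v⟫)
            / (⟪u, u⟫ * ⟪v, v⟫ - ⟪u, v⟫ ^ 2)) ∧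
    ((∀ w ∈ W, D w = w) → (∀ w ∈ W, N w = w) →
      ∀ u v : E, v ∈ W → ⟪u, u⟫ * ⟪v, v⟫ - ⟪u, v⟫ ^ 2 ≠ 0 →
        ⟪Rm u v v, u⟫ / (⟪u, u⟫ * ⟪v, v⟫ - ⟪u, v⟫ ^ 2) = -1) := by
  intro Rm
  refine ⟨fun u v hv => ?_, fun hD hN u v hv hgram => ?_⟩
  · rw [show Rm u v v = curvature T P D N u v v from rfl,
      inner_curvature_eq hTW hPfix hdecomp N hDsym hDW u hv]
  · rw [show Rm u v v = curvature T P D N u v v from rfl,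
      inner_curvature_eq_neg_gram hT hTW hPW hPfix hdecomp hDsym hDW hD hN u hv,
      neg_div, div_self hgram]
end
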